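/- Let z ∈ M and let U, V ∈ ℂ^{n+1} satisfy Σ_h U^h F_h(z) = 0 and Σ_h V^h F_h(z) = 0, and let X_U, X_V ∈ T_zM be the real tangent vectors whose complex coordinate vectors are U and V (then J X_U, J X_V ∈ T_zM as well). Then the Levi form satisfies ¼ [ h(X_U, X_V) + h(J X_U, J X_V) + i ( h(X_U, J X_V) − h(J X_U, X_V) ) ] = (1/(2 |∂F(z)|)) Σ_{h,k} U^h V̄^k F_{h k̄}(z). -/

import Mathlib

noncomputable section
open scoped BigOperators

/-- `ℂ^{n+1}`, identified with `ℝ^{2n+2}` via its real structure. -/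
abbrev E (n : ℕ) : Type := EuclideanSpace ℂ (Fin (n + 1))

/-- The standard complex structure: multiplication by `i`. -/
def J {n : ℕ} (v : E n) : E n := Complex.I • v

/-- The real inner product `⟨x, y⟩ = Re ⟪x, y⟫`. -/
def rI {n : ℕ} (x y : E n) : ℝ := (inner ℂ x y : ℂ).re

/-- The (real) tangent space at `p` of a hypersurface with unit normal `ν`. -/
def tangAt {n : ℕ} (ν : E n → E n) (p : E n) : Set (E n) := {X | rI (ν p) X = 0}

/-- `M` is a smooth embedded real hypersurface of `ℂ^{n+1}` (locally a regular zero
set of a smooth real function), oriented by the smooth unit normal field `ν`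
(extended smoothly to the ambient space). -/
def IsHypersurface {n : ℕ} (M : Set (E n)) (ν : E n → E n) : Prop :=
  ContDiff ℝ (⊤ : ℕ∞) ν ∧ (∀ p ∈ M, ‖ν p‖ = 1) ∧
    ∀ p ∈ M, ∃ (V : Set (E n)) (F : E n → ℝ), IsOpen V ∧ p ∈ V ∧
      ContDiffOn ℝ (⊤ : ℕ∞) F V ∧ (M ∩ V = {z ∈ V | F z = 0}) ∧
      ∀ z ∈ M ∩ V, ∀ X : E n, (fderiv ℝ F z X = 0 ↔ X ∈ tangAt ν z)

/-- The horizontal (maximal complex) subspace `H_p = {X ∈ T_pM : JX ∈ T_pM}`. -/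
def horizAt {n : ℕ} (ν : E n → E n) (p : E n) : Set (E n) :=
  {X | X ∈ tangAt ν p ∧ J X ∈ tangAt ν p}

/-- The second fundamental form `h(X,Y) = ⟨X, ∂_Y ν⟩`. -/
def sff {n : ℕ} (ν : E n → E n) (p : E n) (X Y : E n) : ℝ :=
  rI X (fderiv ℝ ν p Y)

/-- The family `X_1, …, X_n, J X_1, …, J X_n`. -/
def combined {n : ℕ} (X : Fin n → E n) : (Fin n ⊕ Fin n) → E n :=
  Sum.elim X (fun α => J (X α))

/-- `{X_1, …, X_n, J X_1, …, J X_n}` is an orthonormal basis of the horizontal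
space at `p` (w.r.t. the real inner product). -/
def IsHorizONB {n : ℕ} (ν : E n → E n) (p : E n) (X : Fin n → E n) : Prop :=
  (∀ α, X α ∈ horizAt ν p) ∧
  (∀ i j, rI (combined X i) (combined X j) = if i = j then 1 else 0) ∧
  (∀ Y ∈ horizAt ν p, Y ∈ Submodule.span ℝ (Set.range (combined X)))

/-- The `h`-th standard basis vector of `ℂ^{n+1}`. -/
def bvec {n : ℕ} (h : Fin (n + 1)) : E n := EuclideanSpace.single h 1

/-- The Wirtinger derivative `∂f/∂z_h = ½(∂f/∂x_h - i ∂f/∂y_h)`. -/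
def wz {n : ℕ} (f : E n → ℂ) (z : E n) (h : Fin (n + 1)) : ℂ :=
  (fderiv ℝ f z (bvec h) - Complex.I * fderiv ℝ f z (Complex.I • bvec h)) / 2

/-- The Wirtinger derivative `∂f/∂z̄_h = ½(∂f/∂x_h + i ∂f/∂y_h)`. -/
def wzb {n : ℕ} (f : E n → ℂ) (z : E n) (h : Fin (n + 1)) : ℂ :=
  (fderiv ℝ f z (bvec h) + Complex.I * fderiv ℝ f z (Complex.I • bvec h)) / 2

/-- `F_h = ∂F/∂z_h` for a real-valued `F`. -/
def Fz {n : ℕ} (F : E n → ℝ) (z : E n) (h : Fin (n + 1)) : ℂ :=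
  wz (fun w => (F w : ℂ)) z h

/-- `F_{h k̄} = ∂²F/∂z_h ∂z̄_k`. -/
def Fzzb {n : ℕ} (F : E n → ℝ) (z : E n) (h k : Fin (n + 1)) : ℂ :=
  wz (fun w => wzb (fun w' => (F w' : ℂ)) w k) z h

/-- `|∂F| = (Σ_h F_h F_h̄)^{1/2}`. -/
def pdF {n : ℕ} (F : E n → ℝ) (z : E n) : ℝ :=
  Real.sqrt (∑ h, Complex.normSq (Fz F z h))

/-- The unit normal `ν = ∇F/|∇F|`, whose complex coordinate vector is
`(F_h̄ / |∂F|)_h`. -/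
def nuF {n : ℕ} (F : E n → ℝ) (z : E n) : E n :=
  (WithLp.equiv 2 _).symm fun h => (starRingEnd ℂ) (Fz F z h) / (pdF F z : ℂ)

/-!
For any field `ν` differentiable at `p`, write `L = dν_p`. Then `h(X, Y) = Re ⟪X, LY⟫`
and `h(JX, Y) = Im ⟪X, LY⟫`, so the bracket equals `Σ_h X^h (conj (LY)_h + i conj (L(JY))_h)`;
for a real-linear map `T`, `T Y + i T(iY) = 2 Σ_k Ȳ^k ∂_{z̄_k} T`, which turns this into
`2 Σ_{h,k} X^h Ȳ^k ∂_{z̄_k} ν̄_h`. For `ν = ∇F/|∇F|` we have `ν̄_h = F_h / |∂F|`; the Leibniz rule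
splits `∂_{z̄_k}(F_h / |∂F|)` into `F_{hk̄} / |∂F|` (Wirtinger derivatives commute by symmetry of
the real Hessian) plus `F_h ∂_{z̄_k}(1/|∂F|)`, whose contribution vanishes since `Σ_h U^h F_h = 0`.
-/

open Complex ComplexConjugate

section Wirtinger

variable {n : ℕ} {f g : E n → ℂ} {z : E n}

lemma ContinuousLinearMap.apply_smul_add_I_mul_apply_I_smul {V : Type*} [AddCommGroup V]
    [Module ℂ V] [TopologicalSpace V] (T : V →L[ℝ] ℂ) (c : ℂ) (v : V) :
    T (c • v) + I * T (I • c • v) = conj c * (T v + I * T (I • v)) := by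
  have hc : c • v = c.re • v + c.im • (I • v) := by
    conv_lhs => rw [← c.re_add_im]
    rw [add_smul, mul_smul, coe_smul, coe_smul]
  have hIc : I • c • v = c.re • (I • v) - c.im • v := by
    rw [hc, smul_add, smul_comm I c.re, smul_comm I c.im, smul_smul I I, I_mul_I, neg_one_smul,
      smul_neg, sub_eq_add_neg]
  rw [hIc, hc]
  simp only [map_add, map_sub, ContinuousLinearMap.map_smul]
  conv_rhs => rw [← c.re_add_im]
  simp only [map_add, map_mul, conj_ofReal, conj_I, real_smul]
  linear_combination (↑c.im * T (I • v)) * I_mul_I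

lemma fderiv_add_I_mul_fderiv_I_smul (f : E n → ℂ) (z Y : E n) :
    fderiv ℝ f z Y + I * fderiv ℝ f z (I • Y) = 2 * ∑ k, conj (Y k) * wzb f z k := by
  have hY : Y = ∑ k, Y k • bvec k := by
    ext j
    simp [bvec, Pi.single_apply]
  rw [hY, Finset.smul_sum, map_sum, map_sum, Finset.mul_sum, ← Finset.sum_add_distrib,
    Finset.mul_sum]
  refine Finset.sum_congr rfl fun k _ => ?_
  rw [(fderiv ℝ f z).apply_smul_add_I_mul_apply_I_smul, wzb]
  simp [bvec, Pi.single_apply]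
  ring

lemma wzb_mul (hf : DifferentiableAt ℝ f z) (hg : DifferentiableAt ℝ g z) (k : Fin (n + 1)) :
    wzb (fun w => f w * g w) z k = wzb f z k * g z + f z * wzb g z k := by
  simp only [wzb, fderiv_fun_mul hf hg]
  simp only [add_apply, smul_apply, smul_eq_mul]
  ring

lemma hasFDerivAt_fderiv_apply (hf : DifferentiableAt ℝ (fderiv ℝ f) z) (v : E n) :
    HasFDerivAt (fun w => fderiv ℝ f w v) ((fderiv ℝ (fderiv ℝ f) z).flip v) z := by
  simpa using hf.hasFDerivAt.clm_apply (hasFDerivAt_const v z)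

lemma hasFDerivAt_wz (hf : DifferentiableAt ℝ (fderiv ℝ f) z) (h : Fin (n + 1)) :
    HasFDerivAt (fun w => wz f w h) ((2 : ℂ)⁻¹ • ((fderiv ℝ (fderiv ℝ f) z).flip (bvec h)
      - I • (fderiv ℝ (fderiv ℝ f) z).flip (I • bvec h))) z := by
  simp only [wz, div_eq_mul_inv]
  exact ((hasFDerivAt_fderiv_apply hf (bvec h)).fun_sub
    ((hasFDerivAt_fderiv_apply hf (I • bvec h)).const_mul I)).mul_const _

lemma hasFDerivAt_wzb (hf : DifferentiableAt ℝ (fderiv ℝ f) z) (k : Fin (n + 1)) :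
    HasFDerivAt (fun w => wzb f w k) ((2 : ℂ)⁻¹ • ((fderiv ℝ (fderiv ℝ f) z).flip (bvec k)
      + I • (fderiv ℝ (fderiv ℝ f) z).flip (I • bvec k))) z := by
  simp only [wzb, div_eq_mul_inv]
  exact ((hasFDerivAt_fderiv_apply hf (bvec k)).fun_add
    ((hasFDerivAt_fderiv_apply hf (I • bvec k)).const_mul I)).mul_const _

lemma wzb_wz_comm (hf : ContDiffAt ℝ 2 f z) (h k : Fin (n + 1)) :
    wzb (fun w => wz f w h) z k = wz (fun w => wzb f w k) z h := by
  have hf' : DifferentiableAt ℝ (fderiv ℝ f) z :=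
    (hf.fderiv_right (m := 1) (by norm_num)).differentiableAt one_ne_zero
  have hsymm := hf.isSymmSndFDerivAt (by simp)
  rw [wzb, wz, (hasFDerivAt_wz hf' h).fderiv, (hasFDerivAt_wzb hf' k).fderiv]
  simp only [smul_apply, sub_apply, add_apply, ContinuousLinearMap.flip_apply, smul_eq_mul,
    hsymm.eq (bvec h), hsymm.eq (I • bvec h)]
  ring

end Wirtinger

def leviForm {n : ℕ} (ν : E n → E n) (p X Y : E n) : ℂ :=
  (((sff ν p X Y + sff ν p (J X) (J Y) : ℝ) : ℂ)
    + I * ((sff ν p X (J Y) - sff ν p (J X) Y : ℝ) : ℂ)) / 4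

section LeviForm

variable {n : ℕ} {ν : E n → E n} {p : E n}

lemma sff_J_left (ν : E n → E n) (p X Y : E n) :
    sff ν p (J X) Y = (inner ℂ X (fderiv ℝ ν p Y)).im := by
  simp [sff, rI, J]

lemma conj_fderiv_apply (hν : DifferentiableAt ℝ ν p) (Y : E n) (h : Fin (n + 1)) :
    conj (fderiv ℝ ν p Y h) = fderiv ℝ (fun w => conj (ν w h)) p Y := by
  have hcoord := (conjCLE.toContinuousLinearMap.hasFDerivAt).comp p
    ((PiLp.proj (𝕜 := ℝ) 2 (fun _ : Fin (n + 1) => ℂ) h).hasFDerivAt.comp p hν.hasFDerivAt)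
  exact (DFunLike.congr_fun hcoord.fderiv Y).symm

lemma leviForm_eq_sum_wzb (hν : DifferentiableAt ℝ ν p) (X Y : E n) :
    leviForm ν p X Y
      = (1 / 2) * ∑ h, ∑ k, X h * conj (Y k) * wzb (fun w => conj (ν w h)) p k := by
  have hinner : ∀ Y', conj (inner ℂ X (fderiv ℝ ν p Y'))
      = ∑ h, X h * fderiv ℝ (fun w => conj (ν w h)) p Y' := by
    intro Y'
    simp [PiLp.inner_apply, ← conj_fderiv_apply hν, mul_comm]
  have hsum : (((sff ν p X Y + sff ν p (J X) (J Y) : ℝ) : ℂ)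
      + I * ((sff ν p X (J Y) - sff ν p (J X) Y : ℝ) : ℂ))
      = conj (inner ℂ X (fderiv ℝ ν p Y)) + I * conj (inner ℂ X (fderiv ℝ ν p (J Y))) := by
    rw [sff_J_left, sff_J_left, sff, sff, rI, rI]
    generalize inner ℂ X (fderiv ℝ ν p Y) = a
    generalize inner ℂ X (fderiv ℝ ν p (J Y)) = b
    simp [Complex.ext_iff, add_comm, sub_eq_add_neg]
  calc leviForm ν p X Y
      = (∑ h, X h * (fderiv ℝ (fun w => conj (ν w h)) p Y
          + I * fderiv ℝ (fun w => conj (ν w h)) p (I • Y))) / 4 := by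
        rw [leviForm, hsum, hinner, hinner, J, Finset.mul_sum, ← Finset.sum_add_distrib]
        simp only [mul_add, mul_left_comm I]
    _ = (1 / 2) * ∑ h, ∑ k, X h * conj (Y k) * wzb (fun w => conj (ν w h)) p k := by
        simp only [fderiv_add_I_mul_fderiv_I_smul, Finset.mul_sum, Finset.sum_div]
        refine Finset.sum_congr rfl fun h _ => Finset.sum_congr rfl fun k _ => ?_
        ring

end LeviForm

section DefiningFunction

variable {n : ℕ} {F : E n → ℝ} {z : E n}

lemma differentiableAt_Fz (hF : ContDiffAt ℝ 2 F z) (h : Fin (n + 1)) :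
    DifferentiableAt ℝ (fun w => Fz F w h) z :=
  (hasFDerivAt_wz ((ofRealCLM.contDiff.contDiffAt.comp z hF).fderiv_right (m := 1) le_rfl
    |>.differentiableAt one_ne_zero) h).differentiableAt

lemma wzb_Fz (hF : ContDiffAt ℝ 2 F z) (h k : Fin (n + 1)) :
    wzb (fun w => Fz F w h) z k = Fzzb F z h k :=
  wzb_wz_comm (ofRealCLM.contDiff.contDiffAt.comp z hF) h k

lemma differentiableAt_pdF (hF : ContDiffAt ℝ 2 F z) (hp : pdF F z ≠ 0) :
    DifferentiableAt ℝ (pdF F) z := by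
  have hsum : DifferentiableAt ℝ (fun w => ∑ h, Complex.normSq (Fz F w h)) z := by
    simp only [Complex.normSq_eq_norm_sq]
    exact DifferentiableAt.fun_sum fun h _ => (differentiableAt_Fz hF h).norm_sq ℝ
  exact hsum.sqrt fun h0 => hp (by rw [pdF, h0, Real.sqrt_zero])

lemma differentiableAt_inv_pdF (hF : ContDiffAt ℝ 2 F z) (hp : pdF F z ≠ 0) :
    DifferentiableAt ℝ (fun w => ((pdF F w : ℂ))⁻¹) z :=
  (ofRealCLM.differentiableAt.comp z (differentiableAt_pdF hF hp)).inv (by simpa using hp)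

lemma conj_nuF_apply (h : Fin (n + 1)) :
    (fun w => conj (nuF F w h)) = fun w => Fz F w h * ((pdF F w : ℂ))⁻¹ := by
  funext w
  simp [nuF, div_eq_mul_inv]

lemma differentiableAt_nuF (hF : ContDiffAt ℝ 2 F z) (hp : pdF F z ≠ 0) :
    DifferentiableAt ℝ (nuF F) z := by
  refine (differentiableAt_piLp 2).2 fun h => ?_
  simp only [nuF, div_eq_mul_inv]
  exact (conjCLE.differentiableAt.comp z (differentiableAt_Fz hF h)).mul
    (differentiableAt_inv_pdF hF hp)

lemma leviForm_nuF (hF : ContDiffAt ℝ 2 F z) (hp : pdF F z ≠ 0) (X Y : E n)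
    (hX : ∑ h, X h * Fz F z h = 0) :
    leviForm (nuF F) z X Y
      = (1 / (2 * (pdF F z : ℂ))) * ∑ h, ∑ k, X h * conj (Y k) * Fzzb F z h k := by
  set q : E n → ℂ := fun w => ((pdF F w : ℂ))⁻¹
  have hwzb : ∀ h k, wzb (fun w => conj (nuF F w h)) z k
      = Fzzb F z h k * q z + Fz F z h * wzb q z k := by
    intro h k
    rw [conj_nuF_apply, wzb_mul (differentiableAt_Fz hF h) (differentiableAt_inv_pdF hF hp),
      wzb_Fz hF]
  have htangent : ∑ h, ∑ k, X h * conj (Y k) * (Fz F z h * wzb q z k) = 0 := by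
    rw [← zero_mul (∑ k, conj (Y k) * wzb q z k), ← hX, Finset.sum_mul_sum]
    exact Finset.sum_congr rfl fun _ _ => Finset.sum_congr rfl fun _ _ => by ring
  rw [leviForm_eq_sum_wzb (differentiableAt_nuF hF hp)]
  simp only [hwzb, mul_add, Finset.sum_add_distrib, htangent, add_zero, Finset.mul_sum]
  refine Finset.sum_congr rfl fun h _ => Finset.sum_congr rfl fun k _ => ?_
  simp only [q]
  ring

end DefiningFunction

theorem stmt5_general {n : ℕ} (Ω : Set (E n)) (hΩ : IsOpen Ω)
    (F : E n → ℝ) (hF : ContDiffOn ℝ (⊤ : ℕ∞) F Ω)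
    (hreg : ∀ z ∈ Ω, F z = 0 → pdF F z ≠ 0)
    (z : E n) (hz : z ∈ Ω) (hz0 : F z = 0)
    (U V : Fin (n + 1) → ℂ)
    (hU : ∑ h, U h * Fz F z h = 0)
    (XU XV : E n) (hXU : XU = (WithLp.equiv 2 _).symm U) (hXV : XV = (WithLp.equiv 2 _).symm V) :
    (((sff (nuF F) z XU XV + sff (nuF F) z (J XU) (J XV) : ℝ) : ℂ)
        + Complex.I * ((sff (nuF F) z XU (J XV) - sff (nuF F) z (J XU) XV : ℝ) : ℂ)) / 4
      = (1 / (2 * (pdF F z : ℂ))) * ∑ h, ∑ k, U h * (starRingEnd ℂ) (V k) * Fzzb F z h k := by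
  have hF2 : ContDiffAt ℝ 2 F z :=
    (hF.contDiffAt (hΩ.mem_nhds hz)).of_le (WithTop.coe_le_coe.mpr le_top)
  have hp : pdF F z ≠ 0 := hreg z hz hz0
  subst hXU hXV
  exact leviForm_nuF hF2 hp _ _ (by simpa using hU)

theorem stmt5 {n : ℕ} (Ω : Set (E n)) (hΩ : IsOpen Ω)
    (F : E n → ℝ) (hF : ContDiffOn ℝ (⊤ : ℕ∞) F Ω)
    (hreg : ∀ z ∈ Ω, F z = 0 → pdF F z ≠ 0)
    (z : E n) (hz : z ∈ Ω) (hz0 : F z = 0)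
    (U V : Fin (n + 1) → ℂ)
    (hU : ∑ h, U h * Fz F z h = 0) (hV : ∑ h, V h * Fz F z h = 0)
    (XU XV : E n) (hXU : XU = (WithLp.equiv 2 _).symm U) (hXV : XV = (WithLp.equiv 2 _).symm V) :
    (((sff (nuF F) z XU XV + sff (nuF F) z (J XU) (J XV) : ℝ) : ℂ)
        + Complex.I * ((sff (nuF F) z XU (J XV) - sff (nuF F) z (J XU) XV : ℝ) : ℂ)) / 4
      = (1 / (2 * (pdF F z : ℂ))) * ∑ h, ∑ k, U h * (starRingEnd ℂ) (V k) * Fzzb F z h k :=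
  stmt5_general Ω hΩ F hF hreg z hz hz0 U V hU XU XV hXU hXV
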